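/- If a quantum channel Φ has nonzero generalized ℓ₁-cohering power, i.e., there exists a state ρ^A with C_{ℓ₁}(Φ[ρ^A]) − C_{ℓ₁}(ρ^A) = c > 0, then its complete ℓ₁-cohering power is unbounded: for every ancilla dimension k, sup over ρ^{AB} of {C_{ℓ₁}((Φ⊗id_k)[ρ^{AB}]) − C_{ℓ₁}(ρ^{AB})} ≥ c·k, so the supremum over k is +∞. -/

import Mathlib

open scoped Kronecker
open Matrix
open scoped ComplexOrder

/-- A density matrix: positive semidefinite with unit trace. -/
def IsDensity {n : Type*} [Fintype n] (ρ : Matrix n n ℂ) : Prop :=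
  ρ.PosSemidef ∧ ρ.trace = 1

/-- Complete dephasing in the reference basis. -/
def dephase {n : Type*} [Fintype n] [DecidableEq n] (ρ : Matrix n n ℂ) : Matrix n n ℂ :=
  Matrix.diagonal (fun i => ρ i i)

/-- Dephasing of system B only. -/
def dephaseB {a b : Type*} (ρ : Matrix (a × b) (a × b) ℂ) [DecidableEq b] :
    Matrix (a × b) (a × b) ℂ :=
  Matrix.of fun p q => if p.2 = q.2 then ρ p q else 0

/-- Von Neumann entropy with base-2 logarithm (0 for non-Hermitian input). -/
noncomputable def vNEnt {n : Type*} [Fintype n] [DecidableEq n] (ρ : Matrix n n ℂ) : ℝ :=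
  if h : ρ.IsHermitian then ∑ i, -(h.eigenvalues i * Real.logb 2 (h.eigenvalues i)) else 0

/-- Relative entropy of coherence. -/
noncomputable def Cr {n : Type*} [Fintype n] [DecidableEq n] (ρ : Matrix n n ℂ) : ℝ :=
  vNEnt (dephase ρ) - vNEnt ρ

/-- Base-2 matrix logarithm of a Hermitian matrix (with log 0 = 0 convention). -/
noncomputable def matLog2 {n : Type*} [Fintype n] [DecidableEq n] (ρ : Matrix n n ℂ) :
    Matrix n n ℂ :=
  if h : ρ.IsHermitian then
    (h.eigenvectorUnitary : Matrix n n ℂ) *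
      Matrix.diagonal (fun i => (Real.logb 2 (h.eigenvalues i) : ℂ)) *
      star (h.eigenvectorUnitary : Matrix n n ℂ)
  else 0

open scoped Classical in
/-- Quantum relative entropy S(ρ‖σ) (base 2), with value ⊤ when supp ρ ⊄ supp σ. -/
noncomputable def qRelEnt {n : Type*} [Fintype n] [DecidableEq n]
    (ρ σ : Matrix n n ℂ) : EReal :=
  if ∀ x : n → ℂ, σ *ᵥ x = 0 → ρ *ᵥ x = 0 then
    (((ρ * matLog2 ρ).trace - (ρ * matLog2 σ).trace).re : EReal)
  else ⊤

/-- The action of a channel given by Kraus operators. -/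
noncomputable def chanApply {ι n m : Type*} [Fintype ι] [Fintype n] [Fintype m]
    (K : ι → Matrix m n ℂ) (ρ : Matrix n n ℂ) : Matrix m m ℂ :=
  ∑ i, K i * ρ * (K i)ᴴ

/-- Trace preservation for a Kraus family. -/
def IsTPKraus {ι n m : Type*} [Fintype ι] [Fintype n] [Fintype m] [DecidableEq n]
    (K : ι → Matrix m n ℂ) : Prop :=
  ∑ i, (K i)ᴴ * K i = 1

/-- The action of Φ ⊗ id on a bipartite state. -/
noncomputable def chanApplyExt {ι n m b : Type*} [Fintype ι] [Fintype n] [Fintype m]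
    [Fintype b] [DecidableEq b]
    (K : ι → Matrix m n ℂ) (ρ : Matrix (n × b) (n × b) ℂ) : Matrix (m × b) (m × b) ℂ :=
  ∑ i, (K i ⊗ₖ (1 : Matrix b b ℂ)) * ρ * (K i ⊗ₖ (1 : Matrix b b ℂ))ᴴ

/-- Partial trace over system A. -/
noncomputable def ptraceA {a b : Type*} [Fintype a] (ρ : Matrix (a × b) (a × b) ℂ) : Matrix b b ℂ :=
  Matrix.of fun j j' => ∑ i, ρ (i, j) (i, j')

/-- Partial trace over system B. -/
noncomputable def ptraceB {a b : Type*} [Fintype b] (ρ : Matrix (a × b) (a × b) ℂ) : Matrix a a ℂ :=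
  Matrix.of fun i i' => ∑ j, ρ (i, j) (i', j)

/-- ℓ₁-norm of coherence. -/
noncomputable def Cl1 {n : Type*} [Fintype n] [DecidableEq n] (ρ : Matrix n n ℂ) : ℝ :=
  ∑ i, ∑ j, if i = j then 0 else ‖ρ i j‖

/-- The projector onto the maximally coherent state |+_d⟩. -/
noncomputable def plusProj (d : ℕ) : Matrix (Fin d) (Fin d) ℂ :=
  Matrix.of fun _ _ => (1 / d : ℂ)


noncomputable def Sabs {n : Type*} [Fintype n] (ρ : Matrix n n ℂ) : ℝ :=
  ∑ i, ∑ j, ‖ρ i j‖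

lemma psd_diag_nonneg {n : Type*} [Fintype n] [DecidableEq n] {A : Matrix n n ℂ}
    (hA : A.PosSemidef) (i : n) : 0 ≤ A i i := by
  exact hA.diag_nonneg

lemma density_diag_abs_sum {n : Type*} [Fintype n] [DecidableEq n] {ρ : Matrix n n ℂ}
    (h : ρ.PosSemidef) (ht : ρ.trace = 1) : ∑ i, ‖ρ i i‖ = 1 := by
  have habs : ∀ i, ‖ρ i i‖ = (ρ i i).re := by
    intro i
    have h0 := psd_diag_nonneg h i
    rw [Complex.nonneg_iff] at h0
    have : ρ i i = ((ρ i i).re : ℂ) := Complex.ext rfl (by simpa using h0.2.symm)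
    rw [this, Complex.norm_real, Real.norm_of_nonneg h0.1]; simp
  simp_rw [habs]
  have : ((ρ.trace).re : ℝ) = 1 := by rw [ht]; simp
  rw [← this]
  simp [Matrix.trace, Matrix.diag, Complex.re_sum]

lemma kron_conjTranspose {l m p q : Type*} (A : Matrix l m ℂ) (B : Matrix p q ℂ) :
    (A ⊗ₖ B)ᴴ = Aᴴ ⊗ₖ Bᴴ := by
  ext ⟨i,j⟩ ⟨i',j'⟩
  simp [Matrix.conjTranspose_apply, Matrix.kroneckerMap_apply]

lemma psd_kron {n m : Type*} [Fintype n] [Fintype m] [DecidableEq n] [DecidableEq m]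
    {A : Matrix n n ℂ} {B : Matrix m m ℂ} (hA : A.PosSemidef) (hB : B.PosSemidef) :
    (A ⊗ₖ B).PosSemidef := by
  exact hA.kronecker hB

lemma Sabs_kron {n m : Type*} [Fintype n] [Fintype m]
    (A : Matrix n n ℂ) (B : Matrix m m ℂ) : Sabs (A ⊗ₖ B) = Sabs A * Sabs B := by
  unfold Sabs
  simp_rw [Fintype.sum_prod_type, Matrix.kroneckerMap_apply, norm_mul, ← Finset.sum_mul_sum]

lemma Cl1_eq_Sabs {n : Type*} [Fintype n] [DecidableEq n] (ρ : Matrix n n ℂ) :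
    Cl1 ρ = Sabs ρ - ∑ i, ‖ρ i i‖ := by
  unfold Cl1 Sabs
  rw [← Finset.sum_sub_distrib]
  refine Finset.sum_congr rfl fun i _ => ?_
  have : ∑ j, ‖ρ i j‖ =
      (∑ j, if i = j then 0 else ‖ρ i j‖) + ‖ρ i i‖ := by
    have hsplit : ∀ j, ‖ρ i j‖ =
        (if i = j then 0 else ‖ρ i j‖) + (if i = j then ‖ρ i j‖ else 0) := by
      intro j; split <;> simp
    have h2 : ∑ j, ‖ρ i j‖ = ∑ j, ((if i = j then 0 else ‖ρ i j‖) +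
        (if i = j then ‖ρ i j‖ else 0)) :=
      Finset.sum_congr rfl fun j _ => hsplit j
    rw [h2, Finset.sum_add_distrib, Finset.sum_ite_eq]
    simp
  linarith

lemma Cl1_density {n : Type*} [Fintype n] [DecidableEq n] {ρ : Matrix n n ℂ}
    (h : IsDensity ρ) : Cl1 ρ = Sabs ρ - 1 := by
  rw [Cl1_eq_Sabs, density_diag_abs_sum h.1 h.2]

lemma diag_abs_kron {n m : Type*} [Fintype n] [Fintype m]
    (A : Matrix n n ℂ) (B : Matrix m m ℂ) :
    ∑ p : n × m, ‖(A ⊗ₖ B) p p‖ =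
      (∑ i, ‖A i i‖) * ∑ j, ‖B j j‖ := by
  simp_rw [Fintype.sum_prod_type, Matrix.kroneckerMap_apply, norm_mul,
    ← Finset.sum_mul_sum]

lemma density_kron {n m : Type*} [Fintype n] [Fintype m] [DecidableEq n] [DecidableEq m]
    {A : Matrix n n ℂ} {B : Matrix m m ℂ} (hA : IsDensity A) (hB : IsDensity B) :
    IsDensity (A ⊗ₖ B) :=
  ⟨psd_kron hA.1 hB.1, by rw [Matrix.trace_kronecker, hA.2, hB.2, one_mul]⟩

lemma Cl1_kron_density {n m : Type*} [Fintype n] [Fintype m] [DecidableEq n] [DecidableEq m]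
    {A : Matrix n n ℂ} {B : Matrix m m ℂ} (hA : IsDensity A) (hB : IsDensity B) :
    Cl1 (A ⊗ₖ B) = Sabs A * Sabs B - 1 := by
  rw [Cl1_eq_Sabs, Sabs_kron]
  have := diag_abs_kron A B
  rw [this, density_diag_abs_sum hA.1 hA.2, density_diag_abs_sum hB.1 hB.2, one_mul]

lemma plusProj_density {d : ℕ} (hd : 0 < d) : IsDensity (plusProj d) := by
  constructor
  · set C : Matrix (Fin d) (Fin d) ℂ :=
      Matrix.of fun i _ => if i = (⟨0, hd⟩ : Fin d) then ((Real.sqrt (1/d) : ℝ) : ℂ) else 0 with hCdef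
    have : plusProj d = Cᴴ * C := by
      ext i j
      simp only [Matrix.mul_apply, Matrix.conjTranspose_apply, hCdef, Matrix.of_apply, plusProj]
      rw [Finset.sum_eq_single (⟨0, hd⟩ : Fin d)]
      · simp only [if_true, if_pos]
        rw [Complex.star_def, Complex.conj_ofReal, ← Complex.ofReal_mul,
          Real.mul_self_sqrt (by positivity)]
        push_cast
        rw [one_div]
      · intro b _ hb; simp [hb]
      · simp
    rw [this]
    exact Matrix.posSemidef_conjTranspose_mul_self _
  · have hd' : (d : ℂ) ≠ 0 := Nat.cast_ne_zero.mpr hd.ne'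
    simp [Matrix.trace, Matrix.diag, plusProj, Finset.sum_const]
    field_simp

lemma Sabs_plusProj {d : ℕ} (hd : 0 < d) : Sabs (plusProj d) = d := by
  have hd' : (d : ℝ) ≠ 0 := Nat.cast_ne_zero.mpr hd.ne'
  unfold Sabs plusProj
  simp only [Matrix.of_apply, norm_div, norm_one, Complex.norm_natCast, Finset.sum_const,
    Finset.card_univ, Fintype.card_fin, nsmul_eq_mul]
  field_simp

lemma chanApply_density {ι n m : Type*} [Fintype ι] [Fintype n] [Fintype m] [DecidableEq n]
    {K : ι → Matrix m n ℂ} (hK : IsTPKraus K) {ρ : Matrix n n ℂ} (hρ : IsDensity ρ) :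
    IsDensity (chanApply K ρ) := by
  constructor
  · unfold chanApply
    apply Finset.sum_induction _ _ (fun A B (hA : A.PosSemidef) hB => hA.add hB)
    · refine ⟨Matrix.isHermitian_zero, fun x => ?_⟩
      simp
    · intro i _
      exact hρ.1.mul_mul_conjTranspose_same (K i)
  · unfold chanApply
    rw [Matrix.trace_sum]
    have h1 : ∀ i : ι, (K i * ρ * (K i)ᴴ).trace = ((K i)ᴴ * K i * ρ).trace := by
      intro i
      rw [Matrix.trace_mul_comm, ← Matrix.mul_assoc]
    simp_rw [h1, ← Matrix.trace_sum, ← Finset.sum_mul]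
    rw [show (∑ i, (K i)ᴴ * K i) = 1 from hK, Matrix.one_mul, hρ.2]

lemma chanApplyExt_kron {ι n m b : Type*} [Fintype ι] [Fintype n] [Fintype m]
    [Fintype b] [DecidableEq b]
    (K : ι → Matrix m n ℂ) (ρ : Matrix n n ℂ) (σ : Matrix b b ℂ) :
    chanApplyExt K (ρ ⊗ₖ σ) = (chanApply K ρ) ⊗ₖ σ := by
  unfold chanApplyExt chanApply
  have h1 : ∀ i : ι, (K i ⊗ₖ (1 : Matrix b b ℂ)) * (ρ ⊗ₖ σ) * (K i ⊗ₖ (1 : Matrix b b ℂ))ᴴ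
      = (K i * ρ * (K i)ᴴ) ⊗ₖ σ := by
    intro i
    rw [kron_conjTranspose, Matrix.conjTranspose_one, ← Matrix.mul_kronecker_mul,
      ← Matrix.mul_kronecker_mul, Matrix.one_mul, Matrix.mul_one]
  simp_rw [h1]
  ext ⟨i, j⟩ ⟨i', j'⟩
  simp [Matrix.sum_apply, Matrix.kroneckerMap_apply, Finset.sum_mul]


/-- nonzero generalized ℓ₁-cohering power implies unbounded
complete ℓ₁-cohering power. -/
theorem Cl1_complete_cohering_power_unbounded {dA dA' : ℕ} {ι : Type} [Fintype ι]
    (K : ι → Matrix (Fin dA') (Fin dA) ℂ) (hK : IsTPKraus K)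
    (ρA : Matrix (Fin dA) (Fin dA) ℂ) (hρA : IsDensity ρA)
    (c : ℝ) (hc : 0 < c) (hgain : Cl1 (chanApply K ρA) - Cl1 ρA = c) :
    (∀ k : ℕ, 0 < k →
      ∃ ρAB : Matrix (Fin dA × Fin k) (Fin dA × Fin k) ℂ, IsDensity ρAB ∧
        c * k ≤ Cl1 (chanApplyExt K ρAB) - Cl1 ρAB) ∧
    (∀ M : ℝ, ∃ (k : ℕ) (ρAB : Matrix (Fin dA × Fin k) (Fin dA × Fin k) ℂ),
      IsDensity ρAB ∧ M ≤ Cl1 (chanApplyExt K ρAB) - Cl1 ρAB) := by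
  have hΦ : IsDensity (chanApply K ρA) := chanApply_density hK hρA
  have hS : Sabs (chanApply K ρA) - Sabs ρA = c := by
    have h1 := Cl1_density hΦ
    have h2 := Cl1_density hρA
    linarith [hgain, h1, h2]
  have part1 : ∀ k : ℕ, 0 < k →
      ∃ ρAB : Matrix (Fin dA × Fin k) (Fin dA × Fin k) ℂ, IsDensity ρAB ∧
        c * k ≤ Cl1 (chanApplyExt K ρAB) - Cl1 ρAB := by
    intro k hk
    have hplus := plusProj_density hk
    refine ⟨ρA ⊗ₖ plusProj k, density_kron hρA hplus, ?_⟩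
    rw [chanApplyExt_kron, Cl1_kron_density hΦ hplus, Cl1_kron_density hρA hplus,
      Sabs_plusProj hk]
    nlinarith [hS]
  refine ⟨part1, fun M => ?_⟩
  set k : ℕ := ⌈M / c⌉₊ + 1 with hkdef
  have hk : 0 < k := Nat.succ_pos _
  obtain ⟨ρAB, hd, hle⟩ := part1 k hk
  refine ⟨k, ρAB, hd, le_trans ?_ hle⟩
  have h1 : M / c ≤ (k : ℝ) := by
    calc M / c ≤ (⌈M / c⌉₊ : ℝ) := Nat.le_ceil _
    _ ≤ (k : ℝ) := by push_cast [hkdef]; linarith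
  calc M = (M / c) * c := by field_simp
  _ ≤ (k : ℝ) * c := by nlinarith
  _ = c * k := by ring
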